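/- arXiv:1408.2317 — 2 statements merged into one kernel-verified Lean document; each statement's English description precedes it below -/
import Mathlib

section
/- For every positive integer n, the hypercube Q_n (n ≥ 3) has an interval total t-coloring if and only if n+1 ≤ t ≤ (n+1)(n+2)/2. -/
/-!
In an interval total colouring of `Q_n` every palette is a block of `n + 1` consecutive colours
in `[1, t]`, so `t ≥ n + 1`. For the upper bound start at a vertex `u` whose palette begins with
colour `1`: a vertex `x` at Hamming distance `d + 1` from `u` has `d + 1` distinct edge colours,
all at least the first colour `a x` of its palette, leading to neighbours at distance `d`.
Induction on `d` gives `2 a x + d² ≤ 2 + d (2n + 1)`, whence `2t ≤ (n + 1)(n + 2)`.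

Conversely `Q_{n+1}` is the prism `Q_n □ K₂`. Colouring the two layers by an interval colouring
of `Q_n`, the second one possibly shifted, and each rung by a colour adjacent to the palettes of
its ends gives interval edge colourings of `Q_n` of every span in `[n, n(n+1)/2]`, and interval
total colourings of span `t + n + 2` of `Q_{n+1}` from those of span `t` of `Q_n`. An interval
edge colouring of span `t` of a bipartite graph becomes a total one of span `t + 2` by putting
each vertex colour just below or just above its edge palette, according to its side. The span
`n + 1` comes from an explicit colouring of `Q_3`, carried up by recolouring the second layer
with a fixed-point-free cyclic permutation of the colours.
-/

namespace ITC

variable {V : Type*}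

/-- A total coloring: proper on vertices, edges, and incident vertex-edge pairs. -/
def IsTotalColoring (G : SimpleGraph V) (cv : V → ℕ) (ce : Sym2 V → ℕ) : Prop :=
  (∀ u v, G.Adj u v → cv u ≠ cv v) ∧
  (∀ e f, e ∈ G.edgeSet → f ∈ G.edgeSet → e ≠ f → (∃ w, w ∈ e ∧ w ∈ f) → ce e ≠ ce f) ∧
  (∀ v e, e ∈ G.edgeSet → v ∈ e → cv v ≠ ce e)

/-- The set of colors on a vertex `v` together with its incident edges. -/
def palette (G : SimpleGraph V) (cv : V → ℕ) (ce : Sym2 V → ℕ) (v : V) : Set ℕ :=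
  insert (cv v) {c | ∃ e ∈ G.edgeSet, v ∈ e ∧ ce e = c}

/-- Degree of a vertex. -/
noncomputable def deg (G : SimpleGraph V) (v : V) : ℕ := (G.neighborSet v).ncard

/-- An interval total `t`-coloring. -/
def IsIntervalTotalColoring (G : SimpleGraph V) (t : ℕ) (cv : V → ℕ)
    (ce : Sym2 V → ℕ) : Prop :=
  IsTotalColoring G cv ce ∧
  (∀ v, cv v ∈ Set.Icc 1 t) ∧ (∀ e ∈ G.edgeSet, ce e ∈ Set.Icc 1 t) ∧
  (∀ c ∈ Set.Icc 1 t, (∃ v, cv v = c) ∨ (∃ e ∈ G.edgeSet, ce e = c)) ∧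
  (∀ v, ∃ a, palette G cv ce v = Set.Icc a (a + deg G v))

def HasIntervalTotalColoring (G : SimpleGraph V) (t : ℕ) : Prop :=
  ∃ cv ce, IsIntervalTotalColoring G t cv ce

/-- Minimum span of interval total colorings. -/
noncomputable def wtau (G : SimpleGraph V) : ℕ := sInf {t | HasIntervalTotalColoring G t}

/-- Maximum span of interval total colorings. -/
noncomputable def Wtau (G : SimpleGraph V) : ℕ := sSup {t | HasIntervalTotalColoring G t}

/-- Total chromatic number: least `k` such that there is a total coloring
with colors in `{1, …, k}`. -/
noncomputable def totalChromaticNumber (G : SimpleGraph V) : ℕ :=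
  sInf {k | ∃ cv ce, IsTotalColoring G cv ce ∧ (∀ v, cv v ∈ Set.Icc 1 k) ∧
    ∀ e ∈ G.edgeSet, ce e ∈ Set.Icc 1 k}

/-- A proper edge coloring. -/
def IsProperEdgeColoring (G : SimpleGraph V) (ce : Sym2 V → ℕ) : Prop :=
  ∀ e f, e ∈ G.edgeSet → f ∈ G.edgeSet → e ≠ f → (∃ w, w ∈ e ∧ w ∈ f) → ce e ≠ ce f

/-- Colors appearing on the edges incident to `v`. -/
def edgePalette (G : SimpleGraph V) (ce : Sym2 V → ℕ) (v : V) : Set ℕ :=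
  {c | ∃ e ∈ G.edgeSet, v ∈ e ∧ ce e = c}

/-- An interval (edge) `t`-coloring. -/
def IsIntervalEdgeColoring (G : SimpleGraph V) (t : ℕ) (ce : Sym2 V → ℕ) : Prop :=
  IsProperEdgeColoring G ce ∧
  (∀ e ∈ G.edgeSet, ce e ∈ Set.Icc 1 t) ∧
  (∀ c ∈ Set.Icc 1 t, ∃ e ∈ G.edgeSet, ce e = c) ∧
  (∀ v, ∃ a, edgePalette G ce v = Set.Icc (a + 1) (a + deg G v))

/-- The hypercube `Q_n`. -/
def hypercube (n : ℕ) : SimpleGraph (Fin n → Bool) where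
  Adj u v := ∃! i, u i ≠ v i
  symm := by
    constructor
    rintro u v ⟨i, hi, hu⟩
    exact ⟨i, Ne.symm hi, fun j hj => hu j (Ne.symm hj)⟩
  loopless := by
    constructor
    rintro u ⟨i, hi, -⟩
    exact hi rfl

/-- The complete graph on `Fin (2*r)` minus the perfect matching joining `i` and `i+r`. -/
def Kminus (r : ℕ) : SimpleGraph (Fin (2 * r)) where
  Adj i j := i ≠ j ∧ ¬((i : ℕ) + r = (j : ℕ) ∨ (j : ℕ) + r = (i : ℕ))
  symm := by
    constructor
    rintro i j ⟨h1, h2⟩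
    exact ⟨h1.symm, fun h => h2 h.symm⟩
  loopless := by
    constructor
    rintro i ⟨h1, -⟩
    exact h1 rfl

/-- Blow up each vertex of `H` into a copy of `β` (no edges inside copies). -/
def blowup {α : Type*} (H : SimpleGraph α) (β : Type*) : SimpleGraph (α × β) where
  Adj u v := H.Adj u.1 v.1
  symm := ⟨fun _ _ h => H.adj_symm h⟩
  loopless := ⟨fun u h => H.irrefl h⟩

open Set SimpleGraph

def HasIntervalEdgeColoring (G : SimpleGraph V) (t : ℕ) : Prop :=
  ∃ ce, IsIntervalEdgeColoring G t ce

section Palette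

variable {G : SimpleGraph V} {t : ℕ} {cv : V → ℕ} {ce : Sym2 V → ℕ}

lemma palette_eq_insert (v : V) : palette G cv ce v = insert (cv v) (edgePalette G ce v) := rfl

lemma edgePalette_eq_image (ce : Sym2 V → ℕ) (v : V) :
    edgePalette G ce v = (fun y => ce s(v, y)) '' G.neighborSet v := by
  ext c
  constructor
  · rintro ⟨e, he, hv, rfl⟩
    obtain ⟨y, rfl⟩ := Sym2.mem_iff_exists.1 hv
    exact ⟨y, he, rfl⟩
  · rintro ⟨y, hy, rfl⟩
    exact ⟨s(v, y), hy, Sym2.mem_mk_left _ _, rfl⟩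

lemma edgePalette_comp (f : ℕ → ℕ) (ce : Sym2 V → ℕ) (v : V) :
    edgePalette G (f ∘ ce) v = f '' edgePalette G ce v := by
  simp only [edgePalette_eq_image, image_image, Function.comp_apply]

lemma palette_comp (f : ℕ → ℕ) (cv : V → ℕ) (ce : Sym2 V → ℕ) (v : V) :
    palette G (f ∘ cv) (f ∘ ce) v = f '' palette G cv ce v := by
  rw [palette_eq_insert, palette_eq_insert, edgePalette_comp, image_insert_eq, Function.comp_apply]

lemma mem_edgePalette_of_adj (ce : Sym2 V → ℕ) {v y : V} (h : G.Adj v y) :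
    ce s(v, y) ∈ edgePalette G ce v :=
  edgePalette_eq_image ce v ▸ mem_image_of_mem _ h

lemma mem_palette_of_adj (ce : Sym2 V → ℕ) {v y : V} (h : G.Adj v y) :
    ce s(v, y) ∈ palette G cv ce v :=
  mem_insert_of_mem _ (mem_edgePalette_of_adj ce h)

lemma injOn_of_edgePalette_eq_Icc [Finite V] {v : V} {a : ℕ}
    (h : edgePalette G ce v = Icc (a + 1) (a + deg G v)) :
    InjOn (fun y => ce s(v, y)) (G.neighborSet v) := by
  refine injOn_of_ncard_image_eq ?_
  rw [← edgePalette_eq_image, h, ncard_Icc_nat, ← deg]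
  omega

/-- A palette of `deg v + 1` colours leaves no room for repetitions, so for interval colourings
properness at the edges comes for free. -/
lemma injOn_of_palette_eq_Icc [Finite V] {v : V} {a : ℕ}
    (h : palette G cv ce v = Icc a (a + deg G v)) :
    cv v ∉ edgePalette G ce v ∧ InjOn (fun y => ce s(v, y)) (G.neighborSet v) := by
  have hcard : (insert (cv v) ((fun y => ce s(v, y)) '' G.neighborSet v)).ncard = deg G v + 1 := by
    rw [← edgePalette_eq_image, ← palette_eq_insert, h, ncard_Icc_nat]; omega
  have himage : ((fun y => ce s(v, y)) '' G.neighborSet v).ncard ≤ deg G v := ncard_image_le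
  have hnotMem : cv v ∉ (fun y => ce s(v, y)) '' G.neighborSet v := by
    intro hmem
    rw [insert_eq_of_mem hmem] at hcard
    omega
  rw [ncard_insert_of_notMem hnotMem] at hcard
  exact ⟨edgePalette_eq_image ce v ▸ hnotMem, injOn_of_ncard_image_eq (by rw [← deg]; omega)⟩

lemma isProperEdgeColoring_of_injOn
    (h : ∀ v, InjOn (fun y => ce s(v, y)) (G.neighborSet v)) : IsProperEdgeColoring G ce := by
  rintro e f he hf hef ⟨w, hwe, hwf⟩
  obtain ⟨p, rfl⟩ := Sym2.mem_iff_exists.1 hwe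
  obtain ⟨q, rfl⟩ := Sym2.mem_iff_exists.1 hwf
  exact fun hpq => hef (congrArg _ (h w he hf hpq))

theorem isIntervalEdgeColoring_iff [Finite V] :
    IsIntervalEdgeColoring G t ce ↔
      (∀ v, ∃ a, edgePalette G ce v = Icc (a + 1) (a + deg G v)) ∧
      (∀ v, edgePalette G ce v ⊆ Icc 1 t) ∧ Icc 1 t ⊆ ⋃ v, edgePalette G ce v := by
  constructor
  · rintro ⟨-, hbound, hcover, hpal⟩
    refine ⟨hpal, fun v => ?_, fun c hc => ?_⟩
    · rintro _ ⟨e, he, -, rfl⟩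
      exact hbound e he
    · obtain ⟨e, he, rfl⟩ := hcover c hc
      induction e with
      | _ x y => exact mem_iUnion.2 ⟨x, mem_edgePalette_of_adj ce he⟩
  · rintro ⟨hpal, hsub, hcover⟩
    refine ⟨isProperEdgeColoring_of_injOn fun v => ?_, fun e he => ?_, fun c hc => ?_, hpal⟩
    · obtain ⟨a, ha⟩ := hpal v
      exact injOn_of_edgePalette_eq_Icc ha
    · induction e with
      | _ x y => exact hsub x (mem_edgePalette_of_adj ce he)
    · obtain ⟨v, e, he, -, rfl⟩ := mem_iUnion.1 (hcover hc)
      exact ⟨e, he, rfl⟩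

theorem isIntervalTotalColoring_iff [Finite V] :
    IsIntervalTotalColoring G t cv ce ↔
      (∀ u v, G.Adj u v → cv u ≠ cv v) ∧
      (∀ v, ∃ a, palette G cv ce v = Icc a (a + deg G v)) ∧
      (∀ v, palette G cv ce v ⊆ Icc 1 t) ∧ Icc 1 t ⊆ ⋃ v, palette G cv ce v := by
  constructor
  · rintro ⟨⟨hproper, -, -⟩, hvbound, hebound, hcover, hpal⟩
    refine ⟨hproper, hpal, fun v => ?_, fun c hc => ?_⟩
    · rintro _ (rfl | ⟨e, he, -, rfl⟩)
      exacts [hvbound v, hebound e he]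
    · rcases hcover c hc with ⟨v, rfl⟩ | ⟨e, he, rfl⟩
      · exact mem_iUnion.2 ⟨v, mem_insert _ _⟩
      · induction e with
        | _ x y => exact mem_iUnion.2 ⟨x, mem_insert_of_mem _ (mem_edgePalette_of_adj ce he)⟩
  · rintro ⟨hproper, hpal, hsub, hcover⟩
    have hinj := fun v => injOn_of_palette_eq_Icc (hpal v).choose_spec
    refine ⟨⟨hproper, isProperEdgeColoring_of_injOn fun v => (hinj v).2, fun v e he hv => ?_⟩,
      fun v => hsub v (mem_insert _ _), fun e he => ?_, fun c hc => ?_, hpal⟩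
    · obtain ⟨y, rfl⟩ := Sym2.mem_iff_exists.1 hv
      exact fun h => (hinj v).1 (h ▸ mem_edgePalette_of_adj ce he)
    · induction e with
      | _ x y => exact hsub x (mem_insert_of_mem _ (mem_edgePalette_of_adj ce he))
    · obtain ⟨v, hc⟩ := mem_iUnion.1 (hcover hc)
      rcases hc with rfl | ⟨e, he, -, rfl⟩
      exacts [Or.inl ⟨v, rfl⟩, Or.inr ⟨e, he, rfl⟩]

lemma IsIntervalEdgeColoring.exists_start [Finite V] {r : ℕ} (hreg : ∀ v, deg G v = r) (hr : 1 ≤ r)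
    (h : IsIntervalEdgeColoring G t ce) :
    ∃ b : V → ℕ, (∀ v, edgePalette G ce v = Icc (b v + 1) (b v + r)) ∧ ∀ v, b v + r ≤ t := by
  obtain ⟨hpal, hsub, -⟩ := isIntervalEdgeColoring_iff.1 h
  choose b hb using hpal
  simp only [hreg] at hb
  refine ⟨b, hb, fun v => (hsub v (hb v ▸ ⟨by omega, le_rfl⟩)).2⟩

lemma IsIntervalTotalColoring.exists_start [Finite V] {r : ℕ} (hreg : ∀ v, deg G v = r)
    (h : IsIntervalTotalColoring G t cv ce) :
    ∃ a : V → ℕ, (∀ v, palette G cv ce v = Icc (a v) (a v + r)) ∧ ∀ v, 1 ≤ a v ∧ a v + r ≤ t := by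
  obtain ⟨-, hpal, hsub, -⟩ := isIntervalTotalColoring_iff.1 h
  choose a ha using hpal
  simp only [hreg] at ha
  exact ⟨a, ha, fun v => ⟨(hsub v (ha v ▸ ⟨le_rfl, by omega⟩)).1,
    (hsub v (ha v ▸ ⟨by omega, le_rfl⟩)).2⟩⟩

lemma IsIntervalTotalColoring.deg_add_one_le [Finite V] (h : IsIntervalTotalColoring G t cv ce)
    (v : V) : deg G v + 1 ≤ t := by
  obtain ⟨-, hpal, hsub, -⟩ := isIntervalTotalColoring_iff.1 h
  obtain ⟨a, ha⟩ := hpal v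
  have hlo := (hsub v (ha ▸ ⟨le_rfl, by omega⟩ : a ∈ palette G cv ce v)).1
  have hhi := (hsub v (ha ▸ ⟨by omega, le_rfl⟩ : a + deg G v ∈ palette G cv ce v)).2
  omega

lemma add_one_le_of_adj {r : ℕ} {b : V → ℕ}
    (hb : ∀ v, edgePalette G ce v = Icc (b v + 1) (b v + r)) {x y : V} (hxy : G.Adj x y) :
    b x + 1 ≤ b y + r := by
  have hx := hb x ▸ mem_edgePalette_of_adj ce hxy
  have hy := hb y ▸ mem_edgePalette_of_adj ce hxy.symm
  rw [Sym2.eq_swap] at hy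
  exact hx.1.trans hy.2

lemma exists_color_eq_mem_edgePalette (C : G.Coloring Bool) {c : ℕ} {v : V}
    (hc : c ∈ edgePalette G ce v) (β : Bool) : ∃ x, C x = β ∧ c ∈ edgePalette G ce x := by
  rw [edgePalette_eq_image] at hc
  obtain ⟨y, hy, rfl⟩ := hc
  by_cases hv : C v = β
  · exact ⟨v, hv, mem_edgePalette_of_adj ce hy⟩
  · refine ⟨y, ?_, by simpa only [Sym2.eq_swap] using mem_edgePalette_of_adj ce hy.symm⟩
    have := C.valid hy
    cases β <;> cases hCv : C v <;> cases hCy : C y <;> simp_all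

end Palette

section Iso

variable {W : Type*} {G : SimpleGraph V} {H : SimpleGraph W} {t : ℕ}

lemma deg_iso (φ : G ≃g H) (v : V) : deg H (φ v) = deg G v := by
  rw [deg, deg, ← Nat.card_coe_set_eq, ← Nat.card_coe_set_eq]
  exact (Nat.card_congr (φ.mapNeighborSet v)).symm

lemma edgePalette_iso (φ : G ≃g H) (ce : Sym2 V → ℕ) (w : W) :
    edgePalette H (ce ∘ Sym2.map φ.symm) w = edgePalette G ce (φ.symm w) := by
  ext c
  simp only [edgePalette_eq_image, mem_image, mem_neighborSet, Function.comp_apply,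
    Sym2.map_mk]
  constructor
  · rintro ⟨y, hy, rfl⟩
    exact ⟨φ.symm y, φ.symm.map_adj_iff.2 hy, rfl⟩
  · rintro ⟨y, hy, rfl⟩
    exact ⟨φ y, by simpa using φ.map_adj_iff.2 hy, by simp⟩

lemma deg_iso_symm (φ : G ≃g H) (w : W) : deg H w = deg G (φ.symm w) := by
  simpa using deg_iso φ (φ.symm w)

theorem HasIntervalEdgeColoring.of_iso [Finite V] (φ : G ≃g H) (h : HasIntervalEdgeColoring G t) :
    HasIntervalEdgeColoring H t := by
  have : Finite W := .of_equiv V φ.toEquiv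
  obtain ⟨ce, h⟩ := h
  refine ⟨ce ∘ Sym2.map φ.symm, ?_⟩
  obtain ⟨hpal, hsub, hcover⟩ := isIntervalEdgeColoring_iff.1 h
  refine isIntervalEdgeColoring_iff.2 ⟨fun w => ?_, fun w => ?_, ?_⟩
  · rw [edgePalette_iso, deg_iso_symm φ]
    exact hpal _
  · rw [edgePalette_iso]
    exact hsub _
  · simpa only [edgePalette_iso, φ.symm.surjective.iUnion_comp] using hcover

theorem HasIntervalTotalColoring.of_iso [Finite V] (φ : G ≃g H) (h : HasIntervalTotalColoring G t) :
    HasIntervalTotalColoring H t := by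
  have : Finite W := .of_equiv V φ.toEquiv
  obtain ⟨cv, ce, h⟩ := h
  refine ⟨cv ∘ φ.symm, ce ∘ Sym2.map φ.symm, ?_⟩
  have hpalette (w : W) :
      palette H (cv ∘ φ.symm) (ce ∘ Sym2.map φ.symm) w = palette G cv ce (φ.symm w) := by
    rw [palette_eq_insert, palette_eq_insert, edgePalette_iso, Function.comp_apply]
  obtain ⟨hproper, hpal, hsub, hcover⟩ := isIntervalTotalColoring_iff.1 h
  refine isIntervalTotalColoring_iff.2
    ⟨fun u v huv => hproper _ _ (φ.symm.map_adj_iff.2 huv), fun w => ?_, fun w => ?_, ?_⟩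
  · rw [hpalette, deg_iso_symm φ]
    exact hpal _
  · rw [hpalette]
    exact hsub _
  · simpa only [hpalette, φ.symm.surjective.iUnion_comp] using hcover

end Iso

section Prism

variable {G : SimpleGraph V}

abbrev prism (G : SimpleGraph V) : SimpleGraph (V × Bool) := G □ ⊤

/-- The rung colour is read off the endpoint in layer `true`; this makes the function symmetric
without `DecidableEq V`. -/
def prismColoring (c : Bool → Sym2 V → ℕ) (κ : V → ℕ) : Sym2 (V × Bool) → ℕ :=
  Sym2.lift ⟨fun p q => if p.2 = q.2 then c p.2 s(p.1, q.1) else if p.2 then κ p.1 else κ q.1, by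
    rintro ⟨x, i⟩ ⟨y, j⟩
    by_cases hij : i = j
    · subst hij
      simp [Sym2.eq_swap]
    · cases i <;> cases j <;> simp_all⟩

@[simp] lemma prismColoring_layer (c : Bool → Sym2 V → ℕ) (κ : V → ℕ) (x y : V) (i : Bool) :
    prismColoring c κ s((x, i), (y, i)) = c i s(x, y) := by
  simp [prismColoring]

@[simp] lemma prismColoring_rung (c : Bool → Sym2 V → ℕ) (κ : V → ℕ) (x : V) (i : Bool) :
    prismColoring c κ s((x, i), (x, !i)) = κ x := by
  cases i <;> simp [prismColoring]

lemma neighborSet_prism (x : V) (i : Bool) :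
    (prism G).neighborSet (x, i) = insert (x, !i) ((·, i) '' G.neighborSet x) := by
  ext ⟨y, j⟩
  cases i <;> cases j <;> simp [and_comm, eq_comm]

lemma deg_prism [Finite V] (x : V) (i : Bool) : deg (prism G) (x, i) = deg G x + 1 := by
  rw [deg, neighborSet_prism, ncard_insert_of_notMem (by simp),
    ncard_image_of_injective _ (Prod.mk_left_injective i), deg]

lemma edgePalette_prism (c : Bool → Sym2 V → ℕ) (κ : V → ℕ) (x : V) (i : Bool) :
    edgePalette (prism G) (prismColoring c κ) (x, i) = insert (κ x) (edgePalette G (c i) x) := by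
  simp only [edgePalette_eq_image, neighborSet_prism, image_insert_eq, image_image,
    prismColoring_layer, prismColoring_rung]

lemma palette_prism (cv : Bool → V → ℕ) (c : Bool → Sym2 V → ℕ) (κ : V → ℕ) (x : V) (i : Bool) :
    palette (prism G) (fun p => cv p.2 p.1) (prismColoring c κ) (x, i) =
      insert (κ x) (palette G (cv i) (c i) x) := by
  rw [palette_eq_insert, palette_eq_insert, edgePalette_prism, insert_comm]

lemma prism_adj_ne {cv : Bool → V → ℕ} (hlayer : ∀ i u v, G.Adj u v → cv i u ≠ cv i v)
    (hrung : ∀ x, cv false x ≠ cv true x) (p q : V × Bool) (hpq : (prism G).Adj p q) :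
    cv p.2 p.1 ≠ cv q.2 q.1 := by
  obtain ⟨x, i⟩ := p
  obtain ⟨y, j⟩ := q
  rcases hpq with ⟨hxy, rfl : i = j⟩ | ⟨hij, rfl : x = y⟩
  · exact hlayer i x y hxy
  · cases i <;> cases j <;> simp_all [Ne.symm (hrung x)]

def Coloring.prism (C : G.Coloring Bool) : (prism G).Coloring Bool :=
  Coloring.mk (fun p => xor (C p.1) p.2) <| by
    rintro ⟨x, i⟩ ⟨y, j⟩ (⟨hxy, rfl : i = j⟩ | ⟨hij, rfl : x = y⟩)
    · simpa using C.valid hxy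
    · simpa using hij

end Prism

def cycleSucc (m c : ℕ) : ℕ := if c < m then c + 1 else 1

lemma cycleSucc_mem_Icc {m c : ℕ} (hc : c ∈ Icc 1 m) : cycleSucc m c ∈ Icc 1 m := by
  unfold cycleSucc; simp only [mem_Icc] at hc ⊢; split_ifs <;> omega

lemma cycleSucc_injOn (m : ℕ) : InjOn (cycleSucc m) (Icc 1 m) := by
  intro c hc d hd h
  simp only [cycleSucc, mem_Icc] at hc hd h
  split_ifs at h <;> omega

lemma cycleSucc_ne {m c : ℕ} (hm : 2 ≤ m) (hc : c ∈ Icc 1 m) : cycleSucc m c ≠ c := by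
  unfold cycleSucc; simp only [mem_Icc] at hc; split_ifs <;> omega

lemma cycleSucc_image_Icc (m : ℕ) : cycleSucc m '' Icc 1 m = Icc 1 m :=
  ((Finite.injOn_iff_bijOn_of_mapsTo (finite_Icc 1 m) fun _ => cycleSucc_mem_Icc).1
    (cycleSucc_injOn m)).image_eq

section RegularConstructions

variable [Finite V] {G : SimpleGraph V} {r t : ℕ}

theorem HasIntervalEdgeColoring.prism_add_one [Nonempty V] (hreg : ∀ v, deg G v = r)
    (hr : 1 ≤ r) (h : HasIntervalEdgeColoring G t) : HasIntervalEdgeColoring (prism G) (t + 1) := by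
  obtain ⟨ce, h⟩ := h
  obtain ⟨b, hb, hbt⟩ := h.exists_start hreg hr
  obtain ⟨-, -, hcover⟩ := isIntervalEdgeColoring_iff.1 h
  have ht : 1 ≤ t := by have := hbt (Classical.arbitrary V); omega
  obtain ⟨w, hw⟩ := mem_iUnion.1 (hcover ⟨ht, le_rfl⟩)
  rw [hb] at hw
  refine ⟨prismColoring (fun _ => ce) (fun x => b x + r + 1), isIntervalEdgeColoring_iff.2
    ⟨fun ⟨x, i⟩ => ⟨b x, ?_⟩, fun ⟨x, i⟩ => ?_, fun c hc => ?_⟩⟩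
  · rw [edgePalette_prism, deg_prism, hreg, hb]
    ext c; simp only [mem_insert_iff, mem_Icc]; omega
  · rw [edgePalette_prism, hb]
    have := hbt x
    intro c; simp only [mem_insert_iff, mem_Icc]; omega
  · simp only [mem_iUnion, Prod.exists, edgePalette_prism]
    by_cases hct : c ≤ t
    · obtain ⟨x, hx⟩ := mem_iUnion.1 (hcover ⟨hc.1, hct⟩)
      exact ⟨x, false, mem_insert_of_mem _ hx⟩
    · have := hbt w
      exact ⟨w, false, by simp only [mem_insert_iff, mem_Icc] at hw hc ⊢; omega⟩

theorem HasIntervalEdgeColoring.prism_add_deg_add_one [Nonempty V] (hreg : ∀ v, deg G v = r)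
    (hr : 1 ≤ r) (h : HasIntervalEdgeColoring G t) :
    HasIntervalEdgeColoring (prism G) (t + r + 1) := by
  obtain ⟨ce, h⟩ := h
  obtain ⟨b, hb, hbt⟩ := h.exists_start hreg hr
  obtain ⟨-, -, hcover⟩ := isIntervalEdgeColoring_iff.1 h
  have ht : 1 ≤ t := by have := hbt (Classical.arbitrary V); omega
  obtain ⟨w, hw⟩ := mem_iUnion.1 (hcover ⟨le_rfl, ht⟩)
  rw [hb] at hw
  refine ⟨prismColoring (fun i => if i then (· + (r + 1)) ∘ ce else ce) (fun x => b x + r + 1),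
    isIntervalEdgeColoring_iff.2
      ⟨fun ⟨x, i⟩ => ⟨if i then b x + r else b x, ?_⟩, fun ⟨x, i⟩ => ?_, fun c hc => ?_⟩⟩
  · rw [edgePalette_prism, deg_prism, hreg]
    cases i <;> simp only [Bool.false_eq_true, ↓reduceIte, edgePalette_comp, hb,
      image_add_const_Icc] <;> ext c <;> simp only [mem_insert_iff, mem_Icc] <;> omega
  · rw [edgePalette_prism]
    have := hbt x
    cases i <;> simp only [Bool.false_eq_true, ↓reduceIte, edgePalette_comp, hb,
      image_add_const_Icc] <;> intro c <;> simp only [mem_insert_iff, mem_Icc] <;> omega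
  · simp only [mem_iUnion, Prod.exists, edgePalette_prism]
    by_cases hct : c ≤ t
    · obtain ⟨x, hx⟩ := mem_iUnion.1 (hcover ⟨hc.1, hct⟩)
      exact ⟨x, false, mem_insert_of_mem _ hx⟩
    by_cases hcr : c ≤ r + 1
    · have := hbt w
      exact ⟨w, false, by simp only [mem_insert_iff, mem_Icc] at hw hc ⊢; omega⟩
    · simp only [mem_Icc] at hc
      obtain ⟨x, hx⟩ := mem_iUnion.1 (hcover (show c - (r + 1) ∈ Icc 1 t from ⟨by omega, by omega⟩))
      refine ⟨x, true, mem_insert_of_mem _ ?_⟩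
      rw [if_pos rfl, edgePalette_comp]
      exact ⟨c - (r + 1), hx, by simp only; omega⟩

theorem HasIntervalTotalColoring.prism_add_deg_add_two [Nonempty V] (hreg : ∀ v, deg G v = r)
    (h : HasIntervalTotalColoring G t) : HasIntervalTotalColoring (prism G) (t + r + 2) := by
  obtain ⟨cv, ce, h⟩ := h
  obtain ⟨a, ha, hat⟩ := h.exists_start hreg
  obtain ⟨hproper, -, -, hcover⟩ := isIntervalTotalColoring_iff.1 h
  have ht : 1 ≤ t := by have := hat (Classical.arbitrary V); omega
  obtain ⟨w, hw⟩ := mem_iUnion.1 (hcover ⟨le_rfl, ht⟩)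
  rw [ha] at hw
  let cvs : Bool → V → ℕ := fun i => if i then (· + (r + 2)) ∘ cv else cv
  let ces : Bool → Sym2 V → ℕ := fun i => if i then (· + (r + 2)) ∘ ce else ce
  refine ⟨fun p => cvs p.2 p.1, prismColoring ces (fun x => a x + r + 1),
    isIntervalTotalColoring_iff.2 ⟨prism_adj_ne (fun i u v huv => ?_) (fun x => ?_),
      fun ⟨x, i⟩ => ⟨if i then a x + r + 1 else a x, ?_⟩, fun ⟨x, i⟩ => ?_, fun c hc => ?_⟩⟩
  · have := hproper u v huv
    cases i <;> simp only [cvs, Bool.false_eq_true, ↓reduceIte, Function.comp_apply] <;> omega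
  · simp only [cvs, Bool.false_eq_true, ↓reduceIte, Function.comp_apply]
    omega
  · rw [palette_prism, deg_prism, hreg]
    cases i <;> simp only [cvs, ces, Bool.false_eq_true, ↓reduceIte, palette_comp, ha,
      image_add_const_Icc] <;> ext c <;> simp only [mem_insert_iff, mem_Icc] <;> omega
  · rw [palette_prism]
    have := hat x
    cases i <;> simp only [cvs, ces, Bool.false_eq_true, ↓reduceIte, palette_comp, ha,
      image_add_const_Icc] <;> intro c <;> simp only [mem_insert_iff, mem_Icc] <;> omega
  · simp only [mem_iUnion, Prod.exists, palette_prism]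
    simp only [mem_Icc] at hc
    by_cases hct : c ≤ t
    · obtain ⟨x, hx⟩ := mem_iUnion.1 (hcover ⟨hc.1, hct⟩)
      exact ⟨x, false, mem_insert_of_mem _ hx⟩
    by_cases hcr : c ≤ r + 2
    · have := hat w
      exact ⟨w, false, by simp only [mem_insert_iff, mem_Icc] at hw ⊢; omega⟩
    · obtain ⟨x, hx⟩ := mem_iUnion.1 (hcover (show c - (r + 2) ∈ Icc 1 t from ⟨by omega, by omega⟩))
      refine ⟨x, true, mem_insert_of_mem _ ?_⟩
      simp only [cvs, ces, ↓reduceIte, palette_comp]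
      exact ⟨c - (r + 2), hx, by simp only; omega⟩

/-- Recolouring the second layer by a fixed-point-free cyclic shift of `1, …, r + 1` frees the
colour `r + 2` for all rungs. -/
theorem HasIntervalTotalColoring.prism_deg_add_two [Nonempty V] (hreg : ∀ v, deg G v = r)
    (hr : 1 ≤ r) (h : HasIntervalTotalColoring G (r + 1)) :
    HasIntervalTotalColoring (prism G) (r + 2) := by
  obtain ⟨cv, ce, h⟩ := h
  obtain ⟨a, ha, hat⟩ := h.exists_start hreg
  obtain ⟨hproper, -, -, -⟩ := isIntervalTotalColoring_iff.1 h
  have hpal (x : V) : palette G cv ce x = Icc 1 (r + 1) := by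
    rw [ha, show a x = 1 by have := hat x; omega, add_comm]
  have hcv (x : V) : cv x ∈ Icc 1 (r + 1) := hpal x ▸ mem_insert _ _
  let cvs : Bool → V → ℕ := fun i => if i then cycleSucc (r + 1) ∘ cv else cv
  let ces : Bool → Sym2 V → ℕ := fun i => if i then cycleSucc (r + 1) ∘ ce else ce
  have hpal' (p : V × Bool) :
      palette (prism G) (fun p => cvs p.2 p.1) (prismColoring ces fun _ => r + 2) p =
        Icc 1 (r + 2) := by
    obtain ⟨x, i⟩ := p
    rw [palette_prism, show Icc 1 (r + 2) = insert (r + 2) (Icc 1 (r + 1)) by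
      ext c; simp only [mem_insert_iff, mem_Icc]; omega]
    cases i <;> simp only [cvs, ces, Bool.false_eq_true, ↓reduceIte, palette_comp, hpal,
      cycleSucc_image_Icc]
  refine ⟨fun p => cvs p.2 p.1, prismColoring ces fun _ => r + 2,
    isIntervalTotalColoring_iff.2 ⟨prism_adj_ne (fun i u v huv => ?_) (fun x => ?_),
      fun p => ⟨1, by rw [hpal', deg_prism, hreg, add_comm 1, add_assoc]⟩, fun p => (hpal' p).le,
      fun c hc => mem_iUnion.2 ⟨(Classical.arbitrary V, false), hpal' _ ▸ hc⟩⟩⟩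
  · cases i
    · exact hproper u v huv
    · exact fun heq => hproper u v huv (cycleSucc_injOn _ (hcv u) (hcv v) heq)
  · exact (cycleSucc_ne (by omega) (hcv x)).symm

/-- Each vertex gets the colour just below its shifted edge palette on one side of the
bipartition and just above it on the other; the colour of a common edge separates neighbours. -/
theorem HasIntervalEdgeColoring.hasIntervalTotalColoring_add_two [Nonempty V]
    (C : G.Coloring Bool) (hreg : ∀ v, deg G v = r) (hr : 1 ≤ r)
    (h : HasIntervalEdgeColoring G t) : HasIntervalTotalColoring G (t + 2) := by
  obtain ⟨ce, h⟩ := h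
  obtain ⟨b, hb, hbt⟩ := h.exists_start hreg hr
  obtain ⟨-, -, hcover⟩ := isIntervalEdgeColoring_iff.1 h
  have ht : 1 ≤ t := by have := hbt (Classical.arbitrary V); omega
  obtain ⟨u, hCu, hu⟩ := exists_color_eq_mem_edgePalette C
    (mem_iUnion.1 (hcover ⟨le_rfl, ht⟩)).choose_spec true
  obtain ⟨w, hCw, hw⟩ := exists_color_eq_mem_edgePalette C
    (mem_iUnion.1 (hcover ⟨ht, le_rfl⟩)).choose_spec false
  rw [hb] at hu hw
  let cv : V → ℕ := fun x => if C x then b x + 1 else b x + r + 2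
  have hpal (x : V) : palette G cv ((· + 1) ∘ ce) x =
      insert (cv x) (Icc (b x + 2) (b x + r + 1)) := by
    rw [palette_eq_insert, edgePalette_comp, hb, image_add_const_Icc]
  refine ⟨cv, (· + 1) ∘ ce, isIntervalTotalColoring_iff.2 ⟨fun x y hxy => ?_,
    fun x => ⟨if C x then b x + 1 else b x + 2, ?_⟩, fun x => ?_, fun c hc => ?_⟩⟩
  · have := add_one_le_of_adj hb hxy
    have := add_one_le_of_adj hb hxy.symm
    have := C.valid hxy
    simp only [cv]
    cases hCx : C x <;> cases hCy : C y <;> simp_all <;> omega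
  · rw [hpal, hreg]
    ext c; simp only [cv, mem_insert_iff, mem_Icc]; split_ifs <;> omega
  · rw [hpal]
    have := hbt x
    intro c; simp only [cv, mem_insert_iff, mem_Icc]; split_ifs <;> omega
  · simp only [mem_iUnion, hpal]
    simp only [mem_Icc] at hc
    by_cases hc1 : c = 1
    · exact ⟨u, by simp only [cv, hCu, ↓reduceIte, mem_insert_iff, mem_Icc] at hu ⊢; omega⟩
    by_cases hct : c = t + 2
    · have := hbt w
      exact ⟨w, by
        simp only [cv, hCw, Bool.false_eq_true, ↓reduceIte, mem_insert_iff, mem_Icc] at hw ⊢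
        omega⟩
    obtain ⟨x, hx⟩ := mem_iUnion.1 (hcover (show c - 1 ∈ Icc 1 t from ⟨by omega, by omega⟩))
    rw [hb] at hx
    exact ⟨x, by simp only [mem_insert_iff, mem_Icc] at hx ⊢; omega⟩

end RegularConstructions

section Hypercube

variable {n : ℕ}

lemma hypercube_adj_iff_hammingDist {x y : Fin n → Bool} :
    (hypercube n).Adj x y ↔ hammingDist x y = 1 := by
  simp only [hammingDist, Finset.card_eq_one, Finset.eq_singleton_iff_unique_mem,
    Finset.mem_filter, Finset.mem_univ, true_and]
  rfl

lemma hammingDist_cons (b c : Bool) (x y : Fin n → Bool) :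
    hammingDist (Fin.cons b x : Fin (n + 1) → Bool) (Fin.cons c y) =
      (if b ≠ c then 1 else 0) + hammingDist x y := by
  simp only [hammingDist, Fin.card_filter_univ_succ', Fin.cons_zero, Fin.cons_succ]

def hypercubeSuccIso (n : ℕ) : prism (hypercube n) ≃g hypercube (n + 1) where
  toEquiv := (Equiv.prodComm _ _).trans (Fin.consEquiv fun _ => Bool)
  map_rel_iff' := by
    rintro ⟨x, b⟩ ⟨y, c⟩
    change (hypercube (n + 1)).Adj (Fin.cons b x) (Fin.cons c y) ↔ _
    rw [hypercube_adj_iff_hammingDist, hammingDist_cons, prism, boxProd_adj, top_adj,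
      hypercube_adj_iff_hammingDist]
    by_cases hbc : b = c <;> simp [hbc, hammingDist_eq_zero]

lemma deg_hypercube (x : Fin n → Bool) : deg (hypercube n) x = n := by
  induction n with
  | zero =>
    rw [deg, ncard_eq_zero]
    exact eq_empty_of_forall_notMem fun y (hy : (hypercube 0).Adj x y) =>
      hy.ne (Subsingleton.elim x y)
  | succ n ih =>
    obtain ⟨p, rfl⟩ := (hypercubeSuccIso n).surjective x
    rw [deg_iso, deg_prism, ih]

def hypercubeColoring : (n : ℕ) → (hypercube n).Coloring Bool
  | 0 => Coloring.mk (fun _ => false) fun {x y} h => (h.ne (Subsingleton.elim x y)).elim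
  | n + 1 => (Coloring.prism (hypercubeColoring n)).comp (hypercubeSuccIso n).symm.toHom

end Hypercube

lemma hasIntervalEdgeColoring_one [Finite V] [Nonempty V] {G : SimpleGraph V}
    (hreg : ∀ v, deg G v = 1) : HasIntervalEdgeColoring G 1 := by
  have hpal (v : V) : edgePalette G (fun _ => 1) v = {1} := by
    rw [edgePalette_eq_image]
    exact (nonempty_of_ncard_ne_zero (by rw [← deg, hreg]; omega)).image_const 1
  refine ⟨fun _ => 1, isIntervalEdgeColoring_iff.2 ⟨fun v => ⟨0, ?_⟩, fun v => ?_, ?_⟩⟩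
  · rw [hpal, hreg, Icc_self]
  · rw [hpal, Icc_self]
  · rw [Icc_self, ← hpal (Classical.arbitrary V)]
    exact subset_iUnion _ _

theorem hasIntervalEdgeColoring_hypercube {n t : ℕ} (hn : 1 ≤ n) (hnt : n ≤ t)
    (ht : 2 * t ≤ n * (n + 1)) : HasIntervalEdgeColoring (hypercube n) t := by
  induction n, hn using Nat.le_induction generalizing t with
  | base =>
    obtain rfl : t = 1 := by omega
    exact hasIntervalEdgeColoring_one deg_hypercube
  | succ n hn ih =>
    obtain ⟨m, hm⟩ := Nat.even_mul_succ_self n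
    have hsq : 4 * n ≤ n * (n + 1) + 2 := by
      rcases Nat.lt_or_ge n 3 with h | h
      · interval_cases n <;> omega
      · nlinarith
    have hsucc : (n + 1) * (n + 1 + 1) = n * (n + 1) + 2 * (n + 1) := by ring
    rw [hsucc] at ht
    refine HasIntervalEdgeColoring.of_iso (hypercubeSuccIso n) ?_
    by_cases hsmall : 2 * (t - 1) ≤ n * (n + 1)
    · have := (ih (t := t - 1) (by omega) hsmall).prism_add_one deg_hypercube hn
      rwa [Nat.sub_add_cancel (by omega)] at this
    · have := (ih (t := t - (n + 1)) (by omega) (by omega)).prism_add_deg_add_one deg_hypercube hn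
      rwa [show t - (n + 1) + n + 1 = t by omega] at this

theorem hasIntervalTotalColoring_hypercube {n t : ℕ} (hn : 1 ≤ n) (hnt : n + 2 ≤ t)
    (ht : 2 * t ≤ (n + 1) * (n + 2)) : HasIntervalTotalColoring (hypercube n) t := by
  have hedge (n t : ℕ) (hn : 1 ≤ n) (hnt : n + 2 ≤ t) (ht : 2 * (t - 2) ≤ n * (n + 1)) :
      HasIntervalTotalColoring (hypercube n) t := by
    have := (hasIntervalEdgeColoring_hypercube hn (by omega) ht).hasIntervalTotalColoring_add_two
      (hypercubeColoring n) deg_hypercube hn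
    rwa [Nat.sub_add_cancel (by omega)] at this
  induction n, hn using Nat.le_induction generalizing t with
  | base => exact hedge 1 t le_rfl hnt (by omega)
  | succ n hn ih =>
    by_cases hsmall : 2 * (t - 2) ≤ (n + 1) * (n + 1 + 1)
    · exact hedge (n + 1) t (by omega) hnt hsmall
    obtain ⟨m, hm⟩ := Nat.even_mul_succ_self (n + 1)
    have hsq : 4 * n + 2 ≤ (n + 1) * (n + 2) := by nlinarith
    have hsucc : (n + 1 + 1) * (n + 1 + 2) = (n + 1) * (n + 2) + 2 * (n + 2) := by ring
    rw [hsucc] at ht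
    rw [show (n + 1) * (n + 1 + 1) = (n + 1) * (n + 2) by ring] at hsmall hm
    have := (ih (t := t - (n + 2)) (by omega) (by omega)).prism_add_deg_add_two deg_hypercube
    rw [show t - (n + 2) + n + 2 = t by omega] at this
    exact this.of_iso (hypercubeSuccIso n)

instance (n : ℕ) : DecidableRel (hypercube n).Adj := fun _ _ =>
  decidable_of_iff _ hypercube_adj_iff_hammingDist.symm

def cubeIndex (x : Fin 3 → Bool) : ℕ := (x 0).toNat + 2 * (x 1).toNat + 4 * (x 2).toNat

def cubeVertexColor (x : Fin 3 → Bool) : ℕ := [1, 2, 3, 4, 4, 3, 2, 1].getD (cubeIndex x) 0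

/-- Entry `(i, j)` is the colour of the edge between the vertices with binary indices `i` and `j`
(`0` for non-edges). -/
def cubeEdgeColorTable (x y : Fin 3 → Bool) : ℕ :=
  ([[0, 3, 4, 0, 2, 0, 0, 0], [3, 0, 0, 1, 0, 4, 0, 0], [4, 0, 0, 2, 0, 0, 1, 0],
    [0, 1, 2, 0, 0, 0, 0, 3], [2, 0, 0, 0, 0, 1, 3, 0], [0, 4, 0, 0, 1, 0, 0, 2],
    [0, 0, 1, 0, 3, 0, 0, 4], [0, 0, 0, 3, 0, 2, 4, 0]].getD (cubeIndex x) []).getD (cubeIndex y) 0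

def cubeEdgeColor : Sym2 (Fin 3 → Bool) → ℕ := Sym2.lift ⟨cubeEdgeColorTable, by decide⟩

theorem hasIntervalTotalColoring_hypercube_three : HasIntervalTotalColoring (hypercube 3) 4 := by
  have hproper : ∀ x y, (hypercube 3).Adj x y → cubeVertexColor x ≠ cubeVertexColor y := by
    decide
  have hsub : ∀ x, (1 ≤ cubeVertexColor x ∧ cubeVertexColor x ≤ 4) ∧
      ∀ y, (hypercube 3).Adj x y → 1 ≤ cubeEdgeColorTable x y ∧ cubeEdgeColorTable x y ≤ 4 := by
    decide
  have hsupset : ∀ x, ∀ c < 4, cubeVertexColor x = c + 1 ∨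
      ∃ y, (hypercube 3).Adj x y ∧ cubeEdgeColorTable x y = c + 1 := by
    decide
  have hpal (x : Fin 3 → Bool) :
      palette (hypercube 3) cubeVertexColor cubeEdgeColor x = Icc 1 4 := by
    ext c
    simp only [palette_eq_insert, edgePalette_eq_image, mem_insert_iff, mem_image,
      mem_neighborSet, mem_Icc]
    constructor
    · rintro (rfl | ⟨y, hy, rfl⟩)
      exacts [(hsub x).1, (hsub x).2 y hy]
    · intro hc
      obtain ⟨c, hc', rfl⟩ : ∃ c' < 4, c = c' + 1 := ⟨c - 1, by omega, by omega⟩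
      rcases hsupset x c hc' with h | h
      exacts [Or.inl h.symm, Or.inr h]
  refine ⟨cubeVertexColor, cubeEdgeColor, isIntervalTotalColoring_iff.2 ⟨hproper,
    fun x => ⟨1, by rw [hpal, deg_hypercube]⟩, fun x => (hpal x).le, ?_⟩⟩
  rw [← hpal 0]
  exact subset_iUnion _ _

theorem hasIntervalTotalColoring_hypercube_deg_add_one {n : ℕ} (hn : 3 ≤ n) :
    HasIntervalTotalColoring (hypercube n) (n + 1) := by
  induction n, hn using Nat.le_induction with
  | base => exact hasIntervalTotalColoring_hypercube_three
  | succ n hn ih =>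
    exact ((ih.prism_deg_add_two deg_hypercube (by omega))).of_iso (hypercubeSuccIso n)

section Necessity

variable {n : ℕ}

def toggle (x : Fin n → Bool) (i : Fin n) : Fin n → Bool := Function.update x i (!x i)

lemma hypercube_adj_toggle (x : Fin n → Bool) (i : Fin n) : (hypercube n).Adj x (toggle x i) :=
  ⟨i, by simp [toggle], fun j hj => by_contra fun hji => hj (by simp [toggle, hji])⟩

lemma toggle_injective (x : Fin n → Bool) : Function.Injective (toggle x) := by
  intro i j hij
  by_contra hne
  simpa [toggle, hne] using congrFun hij i

lemma hammingDist_toggle_add_one {x u : Fin n → Bool} {i : Fin n} (h : x i ≠ u i) :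
    hammingDist (toggle x i) u + 1 = hammingDist x u := by
  have hfilter :
      ({j | toggle x i j ≠ u j} : Finset (Fin n)) = ({j | x j ≠ u j} : Finset _).erase i := by
    ext j
    by_cases hji : j = i
    · subst hji
      cases hx : x j <;> cases hu : u j <;> simp_all [toggle]
    · rw [Finset.mem_filter, Finset.mem_erase, Finset.mem_filter]
      simp [toggle, hji]
  rw [hammingDist, hammingDist, hfilter, Finset.card_erase_add_one (by simpa using h)]

lemma exists_add_le_of_lt_card {S : Finset ℕ} {a k : ℕ} (ha : ∀ s ∈ S, a ≤ s)
    (hk : k < S.card) : ∃ s ∈ S, a + k ≤ s := by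
  by_contra! h
  have := Finset.card_le_card fun s hs => Finset.mem_Ico.2 ⟨ha s hs, h s hs⟩
  simp only [Nat.card_Ico, add_tsub_cancel_left] at this
  omega

lemma two_mul_add_hammingDist_sq_le {cv : (Fin n → Bool) → ℕ} {ce : Sym2 (Fin n → Bool) → ℕ}
    {a : (Fin n → Bool) → ℕ} (ha : ∀ v, palette (hypercube n) cv ce v = Icc (a v) (a v + n))
    {u : Fin n → Bool} (hu : a u ≤ 1) (x : Fin n → Bool) :
    2 * a x + hammingDist x u ^ 2 ≤ 2 + hammingDist x u * (2 * n + 1) := by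
  generalize hd : hammingDist x u = d
  induction d generalizing x with
  | zero =>
    rw [hammingDist_eq_zero.1 hd]
    omega
  | succ d ih =>
    let D : Finset (Fin n) := {j | x j ≠ u j}
    have hinj : InjOn (fun i => ce s(x, toggle x i)) D := fun i _ j _ hij =>
      toggle_injective x <| (injOn_of_palette_eq_Icc (by rw [deg_hypercube]; exact ha x)).2
        (by exact hypercube_adj_toggle x i) (by exact hypercube_adj_toggle x j) hij
    obtain ⟨_, hmem, hle⟩ := exists_add_le_of_lt_card (a := a x) (k := d)
      (S := D.image fun i => ce s(x, toggle x i))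
      (by
        simp only [Finset.mem_image]
        rintro _ ⟨i, -, rfl⟩
        exact (ha x ▸ mem_palette_of_adj (cv := cv) ce (hypercube_adj_toggle x i)).1)
      (by rw [Finset.card_image_of_injOn hinj]; change d < hammingDist x u; omega)
    obtain ⟨i, hi, rfl⟩ := Finset.mem_image.1 hmem
    have hdist := hammingDist_toggle_add_one (Finset.mem_filter.1 hi).2
    have hy := ih (toggle x i) (by omega)
    have hey := (ha _ ▸ mem_palette_of_adj (cv := cv) ce (hypercube_adj_toggle x i).symm).2
    rw [Sym2.eq_swap] at hey
    nlinarith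

theorem IsIntervalTotalColoring.two_mul_le_of_hypercube {t : ℕ} {cv : (Fin n → Bool) → ℕ}
    {ce : Sym2 (Fin n → Bool) → ℕ} (h : IsIntervalTotalColoring (hypercube n) t cv ce) :
    2 * t ≤ (n + 1) * (n + 2) := by
  obtain ⟨a, ha, hat⟩ := h.exists_start deg_hypercube
  obtain ⟨-, -, -, hcover⟩ := isIntervalTotalColoring_iff.1 h
  have ht : 1 ≤ t := by have := hat 0; omega
  obtain ⟨u, hu⟩ := mem_iUnion.1 (hcover ⟨le_rfl, ht⟩)
  obtain ⟨w, hw⟩ := mem_iUnion.1 (hcover ⟨ht, le_rfl⟩)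
  rw [ha, mem_Icc] at hu hw
  have hd : hammingDist w u ≤ n := by simpa using hammingDist_le_card_fintype (x := w) (y := u)
  have := two_mul_add_hammingDist_sq_le ha hu.1 w
  have := hat w
  nlinarith

end Necessity

theorem stmt10 (n t : ℕ) (hn : 3 ≤ n) :
    HasIntervalTotalColoring (hypercube n) t ↔
      n + 1 ≤ t ∧ t ≤ (n + 1) * (n + 2) / 2 := by
  rw [Nat.le_div_iff_mul_le two_pos, mul_comm t]
  constructor
  · rintro ⟨cv, ce, h⟩
    exact ⟨deg_hypercube (0 : Fin n → Bool) ▸ h.deg_add_one_le 0, h.two_mul_le_of_hypercube⟩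
  · rintro ⟨hlow, hup⟩
    rcases hlow.eq_or_lt with rfl | hlt
    · exact hasIntervalTotalColoring_hypercube_deg_add_one hn
    · exact hasIntervalTotalColoring_hypercube (by omega) hlt hup

end ITC
end

section
/- For any positive integer n, the complete balanced bipartite graph K_{n,n} has an interval total t-coloring for every t with n+2 ≤ t ≤ W_τ(K_{n,n}), where W_τ(K_{n,n}) = 2n+2 for n ≥ 2 and W_τ(K_{1,1}) = 3. -/
/-!
A palette of `n + 1` consecutive colors already forces a total coloring to be proper around its
vertex, so a coloring of `K_{n,n}` is an interval total coloring as soon as adjacent vertices get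
different colors and every palette is an interval; the colorings with `n + 2 ≤ t ≤ 2n + 2` colors
are then given by explicit formulas close to `i + j + 2`.

For the upper bound, the palette containing `1` belongs to a vertex `u₀` and is `[1, n + 1]`, the
one containing `t` to a vertex `u₁` and is `[t - n, t]`. If `u₀` and `u₁` are adjacent, the edge
between them gives `t ≤ 2n + 1`.
Otherwise both vertices are joined to the `n` vertices `w` of the other side; the colors of the
edges `u₀ w` are distinct, at most `n + 1`, and within `n` of the colors of the edges `u₁ w`,
which are at least `t - n`, so `n` distinct colors fit into `[t - 2n, n + 1]` and `t ≤ 2n + 2`.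
In `K_{1,1}` the two vertices coincide or are adjacent, so `t ≤ 3`.
-/

namespace ITC

variable {V : Type*}

open SimpleGraph Function

section Palette

variable {G : SimpleGraph V} {cv : V → ℕ} {ce : Sym2 V → ℕ}

theorem palette_eq_insert_image (v : V) :
    palette G cv ce v = insert (cv v) (ce '' G.incidenceSet v) := by
  ext c
  simp [palette, incidenceSet, and_assoc]

theorem mem_palette_of_mem_edgeSet {e : Sym2 V} {v : V} (he : e ∈ G.edgeSet) (hv : v ∈ e) :
    ce e ∈ palette G cv ce v :=
  Set.mem_insert_of_mem _ ⟨e, he, hv, rfl⟩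

theorem ncard_incidenceSet_eq_deg (v : V) :
    (G.incidenceSet v).ncard = deg G v := by
  classical
  rw [deg, ← Nat.card_coe_set_eq, ← Nat.card_coe_set_eq]
  exact Nat.card_congr (G.incidenceSetEquivNeighborSet v)

theorem injOn_and_notMem_of_palette_eq_Icc [G.LocallyFinite] {v : V} {a : ℕ}
    (h : palette G cv ce v = Set.Icc a (a + deg G v)) :
    Set.InjOn ce (G.incidenceSet v) ∧ cv v ∉ ce '' G.incidenceSet v := by
  classical
  set S := G.incidenceSet v
  have hS : S.Finite :=
    Set.finite_coe_iff.mp (Finite.of_equiv _ (G.incidenceSetEquivNeighborSet v).symm)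
  have hcard : (insert (cv v) (ce '' S)).ncard = S.ncard + 1 := by
    rw [← palette_eq_insert_image, h, ncard_incidenceSet_eq_deg, ← Finset.coe_Icc,
      Set.ncard_coe_finset, Nat.card_Icc]
    omega
  have himage : (ce '' S).ncard ≤ S.ncard := Set.ncard_image_le hS
  have hnotMem : cv v ∉ ce '' S := fun hmem => by
    rw [Set.insert_eq_of_mem hmem] at hcard
    omega
  refine ⟨(Set.ncard_image_iff hS).mp ?_, hnotMem⟩
  rw [Set.ncard_insert_of_notMem hnotMem (hS.image ce)] at hcard
  omega

theorem isTotalColoring_of_palette_eq_Icc [G.LocallyFinite]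
    (hadj : ∀ u v, G.Adj u v → cv u ≠ cv v)
    (hpal : ∀ v, ∃ a, palette G cv ce v = Set.Icc a (a + deg G v)) :
    IsTotalColoring G cv ce := by
  choose a ha using hpal
  refine ⟨hadj, fun e f he hf hef ⟨w, hwe, hwf⟩ heq => ?_, fun v e he hv heq => ?_⟩
  · exact hef ((injOn_and_notMem_of_palette_eq_Icc (ha w)).1 ⟨he, hwe⟩ ⟨hf, hwf⟩ heq)
  · exact (injOn_and_notMem_of_palette_eq_Icc (ha v)).2 ⟨e, ⟨he, hv⟩, heq.symm⟩

theorem isIntervalTotalColoring_of_palette_eq_Icc [G.LocallyFinite] {t : ℕ} (a : V → ℕ)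
    (hadj : ∀ u v, G.Adj u v → cv u ≠ cv v)
    (hpal : ∀ v, palette G cv ce v = Set.Icc (a v) (a v + deg G v))
    (hrange : ∀ v, 1 ≤ a v ∧ a v + deg G v ≤ t)
    (hcover : ∀ c ∈ Set.Icc 1 t, ∃ v, c ∈ Set.Icc (a v) (a v + deg G v)) :
    IsIntervalTotalColoring G t cv ce := by
  have hsub : ∀ v, palette G cv ce v ⊆ Set.Icc 1 t := fun v => by
    rw [hpal v]
    exact Set.Icc_subset_Icc (hrange v).1 (hrange v).2
  refine ⟨isTotalColoring_of_palette_eq_Icc hadj fun v => ⟨a v, hpal v⟩,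
    fun v => hsub v (Set.mem_insert _ _), fun e he => ?_, fun c hc => ?_, fun v => ⟨a v, hpal v⟩⟩
  · induction e using Sym2.ind with
    | h u w => exact hsub u (mem_palette_of_mem_edgeSet he (Sym2.mem_mk_left u w))
  · obtain ⟨v, hv⟩ := hcover c hc
    rcases (hpal v ▸ hv : c ∈ palette G cv ce v) with rfl | ⟨e, he, -, rfl⟩
    exacts [Or.inl ⟨v, rfl⟩, Or.inr ⟨e, he, rfl⟩]

end Palette

namespace IsIntervalTotalColoring

variable {G : SimpleGraph V} {t : ℕ} {cv : V → ℕ} {ce : Sym2 V → ℕ}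

theorem le_add_deg (h : IsIntervalTotalColoring G t cv ce) {v : V} {c c' : ℕ}
    (hc : c ∈ palette G cv ce v) (hc' : c' ∈ palette G cv ce v) : c' ≤ c + deg G v := by
  obtain ⟨a, ha⟩ := h.2.2.2.2 v
  rw [ha, Set.mem_Icc] at hc hc'
  omega

theorem exists_mem_palette (h : IsIntervalTotalColoring G t cv ce) {c : ℕ}
    (hc : c ∈ Set.Icc 1 t) : ∃ v, c ∈ palette G cv ce v := by
  rcases h.2.2.2.1 c hc with ⟨v, rfl⟩ | ⟨e, he, rfl⟩
  · exact ⟨v, Set.mem_insert _ _⟩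
  · induction e using Sym2.ind with
    | h u w => exact ⟨u, mem_palette_of_mem_edgeSet he (Sym2.mem_mk_left u w)⟩

theorem le_of_adj (h : IsIntervalTotalColoring G t cv ce) {u w : V} (hadj : G.Adj u w)
    (hu : 1 ∈ palette G cv ce u) (hw : t ∈ palette G cv ce w) : t ≤ deg G u + deg G w + 1 := by
  have hle := h.le_add_deg hu (mem_palette_of_mem_edgeSet hadj (Sym2.mem_mk_left u w))
  have hge := h.le_add_deg (mem_palette_of_mem_edgeSet hadj (Sym2.mem_mk_right u w)) hw
  omega

theorem add_le_of_commonNeighbors (h : IsIntervalTotalColoring G t cv ce) {n k : ℕ} (hk : 0 < k)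
    (hdeg : ∀ v, deg G v = n) {u₀ u₁ : V} (w : Fin k → V) (hw : Injective w)
    (h₀ : ∀ j, G.Adj u₀ (w j)) (h₁ : ∀ j, G.Adj u₁ (w j))
    (hu₀ : 1 ∈ palette G cv ce u₀) (hu₁ : t ∈ palette G cv ce u₁) : t + k ≤ 3 * n + 2 := by
  have hf : Injective fun j => ce s(u₀, w j) := fun j j' hjj => by
    by_contra hne
    refine h.1.2.1 _ _ (h₀ j) (h₀ j') (fun heq => hne (hw (Sym2.congr_right.mp heq)))
      ⟨u₀, Sym2.mem_mk_left _ _, Sym2.mem_mk_left _ _⟩ hjj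
  have hf_mem : ∀ j, ce s(u₀, w j) ∈ Finset.Icc (t - 2 * n) (n + 1) := fun j => by
    have hle := h.le_add_deg hu₀ (mem_palette_of_mem_edgeSet (h₀ j) (Sym2.mem_mk_left _ _))
    have hge := h.le_add_deg (mem_palette_of_mem_edgeSet (h₁ j) (Sym2.mem_mk_left _ _)) hu₁
    have hnear := h.le_add_deg (mem_palette_of_mem_edgeSet (h₀ j) (Sym2.mem_mk_right _ _))
      (mem_palette_of_mem_edgeSet (h₁ j) (Sym2.mem_mk_right _ _))
    rw [hdeg] at hle hge hnear
    rw [Finset.mem_Icc]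
    omega
  have hcard := Finset.card_le_card_of_injOn _ (s := Finset.univ) (fun j _ => hf_mem j) hf.injOn
  rw [Finset.card_univ, Fintype.card_fin, Nat.card_Icc] at hcard
  omega

end IsIntervalTotalColoring

section CompleteBipartite

variable {α β : Type*}

theorem deg_completeBipartiteGraph_inl (a : α) :
    deg (completeBipartiteGraph α β) (.inl a) = Nat.card β := by
  have hnbr : (completeBipartiteGraph α β).neighborSet (.inl a) = Set.range Sum.inr := by
    ext (x | y) <;> simp
  rw [deg, hnbr, Set.ncard_range_of_injective Sum.inr_injective]

theorem deg_completeBipartiteGraph_inr (b : β) :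
    deg (completeBipartiteGraph α β) (.inr b) = Nat.card α := by
  have hnbr : (completeBipartiteGraph α β).neighborSet (.inr b) = Set.range Sum.inl := by
    ext (x | y) <;> simp
  rw [deg, hnbr, Set.ncard_range_of_injective Sum.inl_injective]

theorem deg_completeBipartiteGraph_fin {n : ℕ} (v : Fin n ⊕ Fin n) :
    deg (completeBipartiteGraph (Fin n) (Fin n)) v = n := by
  rcases v with i | j
  · rw [deg_completeBipartiteGraph_inl, Nat.card_fin]
  · rw [deg_completeBipartiteGraph_inr, Nat.card_fin]

/-- The edge `s(inl a, inr b)` of `K_{α,β}` gets color `M a b`; non-edges get `0`. -/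
def matrixEdgeColoring (M : α → β → ℕ) : Sym2 (α ⊕ β) → ℕ :=
  Sym2.lift ⟨fun u v => Sum.elim (fun a => Sum.elim (fun _ => 0) (M a))
    (fun b => Sum.elim (fun a => M a b) fun _ => 0) u v, by rintro (a | b) (a' | b') <;> rfl⟩

theorem palette_matrixEdgeColoring_inl (cv : α ⊕ β → ℕ) (M : α → β → ℕ) (a : α) :
    palette (completeBipartiteGraph α β) cv (matrixEdgeColoring M) (.inl a) =
      insert (cv (.inl a)) (Set.range (M a)) := by
  simp [palette, edgeSet_completeBipartiteGraph, matrixEdgeColoring, Set.range]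

theorem palette_matrixEdgeColoring_inr (cv : α ⊕ β → ℕ) (M : α → β → ℕ) (b : β) :
    palette (completeBipartiteGraph α β) cv (matrixEdgeColoring M) (.inr b) =
      insert (cv (.inr b)) (Set.range fun a => M a b) := by
  simp [palette, edgeSet_completeBipartiteGraph, matrixEdgeColoring, Set.range]

end CompleteBipartite

theorem hasIntervalTotalColoring_completeBipartiteGraph_of_matrix {n t : ℕ}
    (cL cR aL aR : Fin n → ℕ) (M : Fin n → Fin n → ℕ) (hvv : ∀ i j, cL i ≠ cR j)
    (hrow : ∀ i, insert (cL i) (Set.range (M i)) = Set.Icc (aL i) (aL i + n))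
    (hcol : ∀ j, insert (cR j) (Set.range fun i => M i j) = Set.Icc (aR j) (aR j + n))
    (hrange : ∀ v, 1 ≤ Sum.elim aL aR v ∧ Sum.elim aL aR v + n ≤ t)
    (hcover : ∀ c ∈ Set.Icc 1 t, ∃ v, c ∈ Set.Icc (Sum.elim aL aR v) (Sum.elim aL aR v + n)) :
    HasIntervalTotalColoring (completeBipartiteGraph (Fin n) (Fin n)) t := by
  classical
  refine ⟨Sum.elim cL cR, matrixEdgeColoring M,
    isIntervalTotalColoring_of_palette_eq_Icc (Sum.elim aL aR) ?_ ?_ ?_ ?_⟩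
  · rintro (i | i) (j | j) hadj
    exacts [absurd hadj (by simp), hvv i j, (hvv j i).symm, absurd hadj (by simp)]
  all_goals simp only [deg_completeBipartiteGraph_fin]
  · rintro (i | j)
    · exact (palette_matrixEdgeColoring_inl _ M i).trans (hrow i)
    · exact (palette_matrixEdgeColoring_inr _ M j).trans (hcol j)
  exacts [hrange, hcover]

/-- Rows `i < p` carry the colors `i + j + 2`, the other rows the same colors reduced into
`[2, n + 1]`; this lifts the columns `j > n - p` so that they reach color `n + p + 1`. -/
theorem hasIntervalTotalColoring_completeBipartiteGraph_of_le {n t : ℕ} (h₁ : n + 2 ≤ t)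
    (h₂ : t ≤ 2 * n + 1) : HasIntervalTotalColoring (completeBipartiteGraph (Fin n) (Fin n)) t := by
  obtain ⟨p, rfl⟩ : ∃ p, t = n + p + 1 := ⟨t - n - 1, by omega⟩
  refine hasIntervalTotalColoring_completeBipartiteGraph_of_matrix
    (fun i => if (i : ℕ) < p then i + 1 else 1)
    (fun j => if (j : ℕ) + p ≤ n then n + 2 else j + p + 2)
    (fun i => if (i : ℕ) < p then i + 1 else 1)
    (fun j => if (j : ℕ) + p ≤ n then 2 else j + p + 2 - n)
    (fun i j => if (i : ℕ) < p ∨ (i : ℕ) + j < n then i + j + 2 else i + j + 2 - n)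
    (fun i j => by split_ifs <;> omega) (fun i => ?_) (fun j => ?_)
    (by rintro (i | j) <;> dsimp only [Sum.elim_inl, Sum.elim_inr] <;> split_ifs <;> omega)
    (fun c hc => ?_)
  · ext c
    simp only [Set.mem_insert_iff, Set.mem_range, Set.mem_Icc]
    refine ⟨by rintro (rfl | ⟨j, rfl⟩) <;> split_ifs <;> omega, fun hc => ?_⟩
    refine or_iff_not_imp_left.mpr fun hne =>
      ⟨⟨if (i : ℕ) + 2 ≤ c then c - i - 2 else c + n - i - 2, by split_ifs at * <;> omega⟩, ?_⟩
    dsimp only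
    split_ifs at * <;> omega
  · ext c
    simp only [Set.mem_insert_iff, Set.mem_range, Set.mem_Icc]
    refine ⟨by rintro (rfl | ⟨i, rfl⟩) <;> split_ifs <;> omega, fun hc => ?_⟩
    refine or_iff_not_imp_left.mpr fun hne =>
      ⟨⟨if (j : ℕ) + 2 ≤ c then c - j - 2 else c + n - j - 2, by split_ifs at * <;> omega⟩, ?_⟩
    dsimp only
    split_ifs at * <;> omega
  · rw [Set.mem_Icc] at hc
    by_cases hlow : c ≤ n + 1
    · exact ⟨.inl ⟨0, by omega⟩, by simp only [Sum.elim_inl, Set.mem_Icc]; split_ifs <;> omega⟩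
    · exact ⟨.inr ⟨n - 1, by omega⟩, by simp only [Sum.elim_inr, Set.mem_Icc]; split_ifs <;> omega⟩

/-- Row `n - 1` is shifted up by one: this frees color `j + n + 1` at every column vertex `j`
and lets the last row vertex take color `2n + 2`. -/
theorem hasIntervalTotalColoring_completeBipartiteGraph_two_mul_add_two {n : ℕ} (hn : 2 ≤ n) :
    HasIntervalTotalColoring (completeBipartiteGraph (Fin n) (Fin n)) (2 * n + 2) := by
  refine hasIntervalTotalColoring_completeBipartiteGraph_of_matrix
    (fun i => if (i : ℕ) + 1 < n then i + 1 else 2 * n + 2)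
    (fun j => j + n + 1)
    (fun i => if (i : ℕ) + 1 < n then i + 1 else n + 2)
    (fun j => j + 2)
    (fun i j => if (i : ℕ) + 1 < n then i + j + 2 else j + n + 2)
    (fun i j => by split_ifs <;> omega) (fun i => ?_) (fun j => ?_)
    (by rintro (i | j) <;> dsimp only [Sum.elim_inl, Sum.elim_inr] <;> (try split_ifs) <;> omega)
    (fun c hc => ?_)
  · ext c
    simp only [Set.mem_insert_iff, Set.mem_range, Set.mem_Icc]
    refine ⟨by rintro (rfl | ⟨j, rfl⟩) <;> split_ifs <;> omega, fun hc => ?_⟩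
    refine or_iff_not_imp_left.mpr fun hne =>
      ⟨⟨if (i : ℕ) + 1 < n then c - i - 2 else c - n - 2, by split_ifs at * <;> omega⟩, ?_⟩
    dsimp only
    split_ifs at * <;> omega
  · ext c
    simp only [Set.mem_insert_iff, Set.mem_range, Set.mem_Icc]
    refine ⟨by rintro (rfl | ⟨i, rfl⟩) <;> (try split_ifs) <;> omega, fun hc => ?_⟩
    refine or_iff_not_imp_left.mpr fun hne =>
      ⟨⟨if c ≤ j + n then c - j - 2 else n - 1, by split_ifs at * <;> omega⟩, ?_⟩
    dsimp only
    split_ifs at * <;> omega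
  · rw [Set.mem_Icc] at hc
    by_cases hlow : c ≤ n + 1
    · exact ⟨.inl ⟨0, by omega⟩, by simp only [Sum.elim_inl, Set.mem_Icc]; split_ifs <;> omega⟩
    · exact ⟨.inl ⟨n - 1, by omega⟩, by simp only [Sum.elim_inl, Set.mem_Icc]; split_ifs <;> omega⟩

theorem le_two_mul_add_two_of_hasIntervalTotalColoring {n t : ℕ}
    (h : HasIntervalTotalColoring (completeBipartiteGraph (Fin n) (Fin n)) t) :
    t ≤ 2 * n + 2 := by
  obtain ⟨cv, ce, h⟩ := h
  rcases Nat.eq_zero_or_pos t with rfl | ht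
  · omega
  obtain ⟨u₀, hu₀⟩ := h.exists_mem_palette ⟨le_rfl, ht⟩
  obtain ⟨u₁, hu₁⟩ := h.exists_mem_palette ⟨ht, le_rfl⟩
  have hdeg := deg_completeBipartiteGraph_fin (n := n)
  rcases u₀ with i₀ | j₀ <;> rcases u₁ with i₁ | j₁
  · have := h.add_le_of_commonNeighbors i₀.pos hdeg Sum.inr Sum.inr_injective
      (fun _ => by simp) (fun _ => by simp) hu₀ hu₁
    omega
  · have := h.le_of_adj (by simp) hu₀ hu₁
    rw [hdeg, hdeg] at this
    omega
  · have := h.le_of_adj (by simp) hu₀ hu₁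
    rw [hdeg, hdeg] at this
    omega
  · have := h.add_le_of_commonNeighbors j₀.pos hdeg Sum.inl Sum.inl_injective
      (fun _ => by simp) (fun _ => by simp) hu₀ hu₁
    omega

theorem le_three_of_hasIntervalTotalColoring_one {t : ℕ}
    (h : HasIntervalTotalColoring (completeBipartiteGraph (Fin 1) (Fin 1)) t) : t ≤ 3 := by
  obtain ⟨cv, ce, h⟩ := h
  rcases Nat.eq_zero_or_pos t with rfl | ht
  · omega
  obtain ⟨u₀, hu₀⟩ := h.exists_mem_palette ⟨le_rfl, ht⟩
  obtain ⟨u₁, hu₁⟩ := h.exists_mem_palette ⟨ht, le_rfl⟩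
  have hdeg := deg_completeBipartiteGraph_fin (n := 1)
  obtain rfl | hadj : u₀ = u₁ ∨ (completeBipartiteGraph (Fin 1) (Fin 1)).Adj u₀ u₁ := by
    rcases u₀ with i₀ | j₀ <;> rcases u₁ with i₁ | j₁ <;> simp [Fin.fin_one_eq_zero]
  · have := h.le_add_deg hu₀ hu₁
    rw [hdeg] at this
    omega
  · have := h.le_of_adj hadj hu₀ hu₁
    rw [hdeg, hdeg] at this
    omega

theorem Wtau_completeBipartiteGraph {n : ℕ} (hn : 2 ≤ n) :
    Wtau (completeBipartiteGraph (Fin n) (Fin n)) = 2 * n + 2 :=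
  IsGreatest.csSup_eq ⟨hasIntervalTotalColoring_completeBipartiteGraph_two_mul_add_two hn,
    fun _ => le_two_mul_add_two_of_hasIntervalTotalColoring⟩

theorem Wtau_completeBipartiteGraph_one : Wtau (completeBipartiteGraph (Fin 1) (Fin 1)) = 3 :=
  IsGreatest.csSup_eq ⟨hasIntervalTotalColoring_completeBipartiteGraph_of_le le_rfl le_rfl,
    fun _ => le_three_of_hasIntervalTotalColoring_one⟩

theorem stmt15 (n : ℕ) (hn : 0 < n) :
    (∀ t, n + 2 ≤ t → t ≤ Wtau (completeBipartiteGraph (Fin n) (Fin n)) →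
      HasIntervalTotalColoring (completeBipartiteGraph (Fin n) (Fin n)) t) ∧
    (2 ≤ n → Wtau (completeBipartiteGraph (Fin n) (Fin n)) = 2 * n + 2) ∧
    (n = 1 → Wtau (completeBipartiteGraph (Fin n) (Fin n)) = 3) := by
  refine ⟨fun t h₁ h₂ => ?_, Wtau_completeBipartiteGraph,
    fun h => h ▸ Wtau_completeBipartiteGraph_one⟩
  rcases le_or_gt t (2 * n + 1) with hle | hgt
  · exact hasIntervalTotalColoring_completeBipartiteGraph_of_le h₁ hle
  obtain hn₂ : 2 ≤ n := by
    by_contra hlt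
    obtain rfl : n = 1 := by omega
    rw [Wtau_completeBipartiteGraph_one] at h₂
    omega
  rw [Wtau_completeBipartiteGraph hn₂] at h₂
  obtain rfl : t = 2 * n + 2 := by omega
  exact hasIntervalTotalColoring_completeBipartiteGraph_two_mul_add_two hn₂

end ITC
end
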